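/- arXiv:2406.13023 — 2 statements merged into one kernel-verified Lean document; each statement's English description precedes it below -/
import Mathlib

section
/- Let f be a monotone k-submodular function on X(N,k). For any Y, Z ∈ X(N,k): f(Y) ≤ f(Z) + Σ_{q=1}^k Σ_{i ∈ Y_q \ ∪_{r=1}^k Z_r} ρ_{q,i}(Z) + Σ_{q=1}^k Σ_{p ≠ q} Σ_{i ∈ Y_q ∩ Z_p} ρ_{q,i}(∅), where ρ_{q,i}(Z) is the marginal gain of adding i to the q-th component of Z and ∅ denotes the tuple of k empty sets. -/
open Finset

/-- A `k`-tuple of subsets of `N` is "k-disjoint" if its components are pairwise disjoint,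
i.e. it belongs to `X(N,k)`. -/
def IsKDisjoint {N : Type*} {k : ℕ} (S : Fin k → Finset N) : Prop :=
  ∀ q q' : Fin k, q ≠ q' → Disjoint (S q) (S q')

/-- Componentwise intersection `X ⊓ Y`. -/
def kInf {N : Type*} [DecidableEq N] {k : ℕ} (X Y : Fin k → Finset N) : Fin k → Finset N :=
  fun q => X q ∩ Y q

/-- The operation `X ⊔ Y`, whose `q`-th component is
`(X_q ∪ Y_q) \ ⋃_{p ≠ q} (X_p ∪ Y_p)`. -/
def kSup {N : Type*} [DecidableEq N] {k : ℕ} (X Y : Fin k → Finset N) : Fin k → Finset N :=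
  fun q => (X q ∪ Y q) \ ((Finset.univ.erase q).biUnion fun p => X p ∪ Y p)

/-- `f` is a `k`-submodular function on `X(N,k)`. -/
def KSubmodular {N : Type*} [DecidableEq N] {k : ℕ} (f : (Fin k → Finset N) → ℝ) : Prop :=
  ∀ X Y : Fin k → Finset N, IsKDisjoint X → IsKDisjoint Y →
    f (kInf X Y) + f (kSup X Y) ≤ f X + f Y

/-- `f` is monotone on `X(N,k)` with respect to componentwise inclusion. -/
def KMonotone {N : Type*} [DecidableEq N] {k : ℕ} (f : (Fin k → Finset N) → ℝ) : Prop :=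
  ∀ X Y : Fin k → Finset N, IsKDisjoint X → IsKDisjoint Y →
    (∀ r, X r ⊆ Y r) → f X ≤ f Y

/-- Marginal gain `ρ_{q,i}(X) = f(X_1,…,X_q ∪ {i},…,X_k) − f(X)`. -/
def marg {N : Type*} [DecidableEq N] {k : ℕ} (f : (Fin k → Finset N) → ℝ)
    (X : Fin k → Finset N) (q : Fin k) (i : N) : ℝ :=
  f (Function.update X q (insert i (X q))) - f X

lemma update_isKDisjoint {N : Type*} [DecidableEq N] {k : ℕ}
    {X : Fin k → Finset N} (hX : IsKDisjoint X) (q : Fin k) (i : N)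
    (hi : ∀ r, i ∉ X r) :
    IsKDisjoint (Function.update X q (insert i (X q))) := by
  intro r s hrs
  by_cases hr : r = q <;> by_cases hs : s = q
  · exact absurd (hr.trans hs.symm) hrs
  · subst hr
    simp only [Function.update_self, Function.update_of_ne hs]
    rw [Finset.disjoint_insert_left]
    exact ⟨hi s, hX r s hrs⟩
  · subst hs
    simp only [Function.update_self, Function.update_of_ne hr]
    rw [Finset.disjoint_insert_right]
    exact ⟨hi r, hX r s hrs⟩
  · simp only [Function.update_of_ne hr, Function.update_of_ne hs]
    exact hX r s hrs

lemma marg_antitone {N : Type*} [DecidableEq N] {k : ℕ}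
    (f : (Fin k → Finset N) → ℝ) (hsub : KSubmodular f)
    {X W : Fin k → Finset N} (hX : IsKDisjoint X) (hW : IsKDisjoint W)
    (hXW : ∀ r, X r ⊆ W r) (q : Fin k) (i : N) (hi : ∀ r, i ∉ W r) :
    marg f W q i ≤ marg f X q i := by
  have hiX : ∀ r, i ∉ X r := fun r h => hi r (hXW r h)
  set A := Function.update X q (insert i (X q)) with hA
  have hAdisj : IsKDisjoint A := update_isKDisjoint hX q i hiX
  have hAmem : ∀ r x, x ∈ A r ↔ (x ∈ X r ∨ (r = q ∧ x = i)) := by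
    intro r x
    by_cases hr : r = q
    · subst hr; simp [hA, Finset.mem_insert]; tauto
    · simp [hA, Function.update_of_ne hr, hr]
  have hinf : kInf A W = X := by
    funext r
    by_cases hr : r = q
    · subst hr
      simp only [kInf, hA, Function.update_self]
      rw [Finset.insert_inter_of_notMem (hi r), Finset.inter_eq_left.mpr (hXW r)]
    · simp only [kInf, hA, Function.update_of_ne hr]
      exact Finset.inter_eq_left.mpr (hXW r)
  have hsup : kSup A W = Function.update W q (insert i (W q)) := by
    funext r
    ext x
    simp only [kSup, Finset.mem_sdiff, Finset.mem_union, Finset.mem_biUnion, Finset.mem_erase,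
      Finset.mem_univ, true_and, and_true]
    have hnb : ∀ x, (x ∈ W r ∨ (r = q ∧ x = i)) → ¬ ∃ p, p ≠ r ∧ (x ∈ A p ∨ x ∈ W p) := by
      rintro y hy ⟨p, hpr, hp⟩
      have hyp : y ∈ W p ∨ (p = q ∧ y = i) := by
        rcases hp with hp | hp
        · rcases (hAmem p y).mp hp with h | h
          · exact Or.inl (hXW p h)
          · exact Or.inr h
        · exact Or.inl hp
      rcases hy with hy | ⟨hrq, hyi⟩
      · rcases hyp with hyp | ⟨_, hyi⟩
        · exact (Finset.disjoint_left.mp (hW r p (Ne.symm hpr)) hy) hyp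
        · subst hyi; exact hi r hy
      · subst hyi
        rcases hyp with hyp | ⟨hpq, _⟩
        · exact hi p hyp
        · exact hpr (hpq.trans hrq.symm)
    by_cases hr : r = q
    · subst hr
      simp only [Function.update_self, Finset.mem_insert]
      constructor
      · rintro ⟨h1, _⟩
        rcases h1 with h1 | h1
        · rcases (hAmem r x).mp h1 with h | h
          · exact Or.inr (hXW r h)
          · exact Or.inl h.2
        · exact Or.inr h1
      · intro h
        rcases h with h | h
        · exact ⟨Or.inl ((hAmem r x).mpr (Or.inr ⟨rfl, h⟩)), hnb x (Or.inr ⟨rfl, h⟩)⟩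
        · exact ⟨Or.inr h, hnb x (Or.inl h)⟩
    · simp only [Function.update_of_ne hr]
      constructor
      · rintro ⟨h1, _⟩
        rcases h1 with h1 | h1
        · rcases (hAmem r x).mp h1 with h | h
          · exact hXW r h
          · exact absurd h.1 hr
        · exact h1
      · intro h
        exact ⟨Or.inr h, hnb x (Or.inl h)⟩
  have h := hsub A W hAdisj hW
  rw [hinf, hsup] at h
  simp only [marg, hA]
  linarith

lemma greedy {N : Type*} [DecidableEq N] {k : ℕ}
    (f : (Fin k → Finset N) → ℝ) (hsub : KSubmodular f) :
    ∀ (n : ℕ) (Z T : Fin k → Finset N), (∑ q, (T q).card) = n →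
    IsKDisjoint Z → IsKDisjoint T → (∀ q r, Disjoint (T q) (Z r)) →
    f (fun q => Z q ∪ T q) ≤ f Z + ∑ q, ∑ i ∈ T q, marg f Z q i := by
  intro n
  induction n with
  | zero =>
    intro Z T hcard hZ hT hTZ
    have hTe : ∀ q, T q = ∅ := by
      intro q
      rw [← Finset.card_eq_zero]
      exact (Finset.sum_eq_zero_iff.mp hcard) q (Finset.mem_univ q)
    simp [hTe]
  | succ n ih =>
    intro Z T hcard hZ hT hTZ
    have hne : ∃ q, (T q).Nonempty := by
      by_contra h
      push_neg at h
      simp [h] at hcard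
    obtain ⟨q, ⟨i, hiT⟩⟩ := hne
    have hiZ : ∀ r, i ∉ Z r := fun r h => Finset.disjoint_left.mp (hTZ q r) hiT h
    have hiT' : ∀ r, r ≠ q → i ∉ T r := fun r hr h =>
      Finset.disjoint_left.mp (hT r q hr) h hiT
    set Z' := Function.update Z q (insert i (Z q)) with hZ'def
    set T' := Function.update T q ((T q).erase i) with hT'def
    have hT'mem : ∀ r x, x ∈ T' r ↔ x ∈ T r ∧ ¬(r = q ∧ x = i) := by
      intro r x
      by_cases hr : r = q
      · subst hr; simp [hT'def, Finset.mem_erase]; tauto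
      · simp [hT'def, Function.update_of_ne hr, hr]
    have hZ'mem : ∀ r x, x ∈ Z' r ↔ x ∈ Z r ∨ (r = q ∧ x = i) := by
      intro r x
      by_cases hr : r = q
      · subst hr; simp [hZ'def, Finset.mem_insert]; tauto
      · simp [hZ'def, Function.update_of_ne hr, hr]
    have hZ'disj : IsKDisjoint Z' := update_isKDisjoint hZ q i hiZ
    have hT'disj : IsKDisjoint T' := by
      intro r s hrs
      rw [Finset.disjoint_left]
      intro x hx hx'
      exact Finset.disjoint_left.mp (hT r s hrs) ((hT'mem r x).mp hx).1 ((hT'mem s x).mp hx').1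
    have hT'Z' : ∀ r s, Disjoint (T' r) (Z' s) := by
      intro r s
      rw [Finset.disjoint_left]
      intro x hx hx'
      obtain ⟨hxT, hxn⟩ := (hT'mem r x).mp hx
      rcases (hZ'mem s x).mp hx' with h | ⟨hsq, hxi⟩
      · exact Finset.disjoint_left.mp (hTZ r s) hxT h
      · subst hxi
        by_cases hr : r = q
        · exact hxn ⟨hr, rfl⟩
        · exact hiT' r hr hxT
    have hcard' : (∑ r, (T' r).card) = n := by
      have e1 : ∑ r, (T' r).card = (T' q).card + ∑ r ∈ Finset.univ.erase q, (T' r).card :=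
        (Finset.add_sum_erase _ _ (Finset.mem_univ q)).symm
      have e2 : ∑ r ∈ Finset.univ.erase q, (T' r).card = ∑ r ∈ Finset.univ.erase q, (T r).card :=
        Finset.sum_congr rfl fun r hr => by
          rw [hT'def, Function.update_of_ne (Finset.ne_of_mem_erase hr)]
      have e3 : (∑ r, (T r).card) = (T q).card + ∑ r ∈ Finset.univ.erase q, (T r).card :=
        (Finset.add_sum_erase _ _ (Finset.mem_univ q)).symm
      have e4 : (T' q).card = (T q).card - 1 := by
        rw [hT'def]; simp [Finset.card_erase_of_mem hiT]
      have hpos : 1 ≤ (T q).card := Finset.card_pos.mpr ⟨i, hiT⟩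
      omega
    have hunion : (fun r => Z' r ∪ T' r) = (fun r => Z r ∪ T r) := by
      funext r
      ext x
      simp only [Finset.mem_union, hZ'mem, hT'mem]
      constructor
      · rintro (h | h)
        · rcases h with h | ⟨hrq, hxi⟩
          · exact Or.inl h
          · subst hxi; subst hrq; exact Or.inr hiT
        · exact Or.inr h.1
      · rintro (h | h)
        · exact Or.inl (Or.inl h)
        · by_cases hc : r = q ∧ x = i
          · exact Or.inl (Or.inr hc)
          · exact Or.inr ⟨h, hc⟩
    have hIH := ih Z' T' hcard' hZ'disj hT'disj hT'Z'
    rw [hunion] at hIH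
    have hmargle : ∀ r, ∀ j ∈ T' r, marg f Z' r j ≤ marg f Z r j := by
      intro r j hj
      obtain ⟨hjT, hjn⟩ := (hT'mem r j).mp hj
      refine marg_antitone f hsub hZ hZ'disj ?_ r j ?_
      · intro s x hx
        exact (hZ'mem s x).mpr (Or.inl hx)
      · intro s h
        rcases (hZ'mem s j).mp h with h | ⟨hsq, hji⟩
        · exact Finset.disjoint_left.mp (hTZ r s) hjT h
        · subst hji
          by_cases hr : r = q
          · exact hjn ⟨hr, rfl⟩
          · exact hiT' r hr hjT
    have hsumle : ∑ r, ∑ j ∈ T' r, marg f Z' r j ≤ ∑ r, ∑ j ∈ T' r, marg f Z r j :=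
      Finset.sum_le_sum fun r _ => Finset.sum_le_sum fun j hj => hmargle r j hj
    have hfZ' : f Z' = f Z + marg f Z q i := by
      simp [marg, hZ'def]
    have hsumeq : marg f Z q i + ∑ r, ∑ j ∈ T' r, marg f Z r j = ∑ r, ∑ j ∈ T r, marg f Z r j := by
      have e1 : ∑ r, ∑ j ∈ T' r, marg f Z r j
          = (∑ j ∈ T' q, marg f Z q j) + ∑ r ∈ Finset.univ.erase q, ∑ j ∈ T' r, marg f Z r j :=
        (Finset.add_sum_erase _ _ (Finset.mem_univ q)).symm
      have e2 : ∑ r ∈ Finset.univ.erase q, ∑ j ∈ T' r, marg f Z r j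
          = ∑ r ∈ Finset.univ.erase q, ∑ j ∈ T r, marg f Z r j :=
        Finset.sum_congr rfl fun r hr => by
          rw [hT'def, Function.update_of_ne (Finset.ne_of_mem_erase hr)]
      have e3 : ∑ r, ∑ j ∈ T r, marg f Z r j
          = (∑ j ∈ T q, marg f Z q j) + ∑ r ∈ Finset.univ.erase q, ∑ j ∈ T r, marg f Z r j :=
        (Finset.add_sum_erase _ _ (Finset.mem_univ q)).symm
      have e4 : ∑ j ∈ T' q, marg f Z q j = ∑ j ∈ (T q).erase i, marg f Z q j := by
        rw [hT'def]; simp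
      have e5 : marg f Z q i + ∑ j ∈ (T q).erase i, marg f Z q j = ∑ j ∈ T q, marg f Z q j :=
        Finset.add_sum_erase _ _ hiT
      linarith
    calc f (fun r => Z r ∪ T r) ≤ f Z' + ∑ r, ∑ j ∈ T' r, marg f Z' r j := hIH
      _ ≤ f Z' + ∑ r, ∑ j ∈ T' r, marg f Z r j := by linarith
      _ = f Z + (marg f Z q i + ∑ r, ∑ j ∈ T' r, marg f Z r j) := by rw [hfZ']; ring
      _ = f Z + ∑ r, ∑ j ∈ T r, marg f Z r j := by rw [hsumeq]

/-- Lemma 9 (Yu and Küçükyavuz): upper bound on `f(Y)` via `f(Z)` and marginal gains. -/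
theorem kSubmodular_upper_bound
    {N : Type*} [Fintype N] [DecidableEq N] {k : ℕ}
    (f : (Fin k → Finset N) → ℝ)
    (hmono : KMonotone f) (hsub : KSubmodular f)
    (Y Z : Fin k → Finset N) (hY : IsKDisjoint Y) (hZ : IsKDisjoint Z) :
    f Y ≤ f Z
      + ∑ q : Fin k, ∑ i ∈ (Y q \ Finset.univ.biUnion Z), marg f Z q i
      + ∑ q : Fin k, ∑ p ∈ Finset.univ.erase q, ∑ i ∈ (Y q ∩ Z p),
          marg f (fun _ => ∅) q i := by
  set U : Fin k → Finset N := fun q => (Finset.univ.erase q).biUnion Z with hU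
  set Ym : Fin k → Finset N := fun q => Y q \ U q with hYm
  set T2 : Fin k → Finset N := fun q => Y q ∩ U q with hT2
  set T1 : Fin k → Finset N := fun q => Y q \ Finset.univ.biUnion Z with hT1
  set Z'' : Fin k → Finset N := fun q => Z q ∪ T1 q with hZ''
  have hYmsub : ∀ q, Ym q ⊆ Y q := fun q => Finset.sdiff_subset
  have hT2sub : ∀ q, T2 q ⊆ Y q := fun q => Finset.inter_subset_left
  have hT1sub : ∀ q, T1 q ⊆ Y q := fun q => Finset.sdiff_subset
  have hYmdisj : IsKDisjoint Ym := fun r s hrs =>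
    Finset.disjoint_of_subset_left (hYmsub r) (Finset.disjoint_of_subset_right (hYmsub s) (hY r s hrs))
  have hT2disj : IsKDisjoint T2 := fun r s hrs =>
    Finset.disjoint_of_subset_left (hT2sub r) (Finset.disjoint_of_subset_right (hT2sub s) (hY r s hrs))
  have hT1disj : IsKDisjoint T1 := fun r s hrs =>
    Finset.disjoint_of_subset_left (hT1sub r) (Finset.disjoint_of_subset_right (hT1sub s) (hY r s hrs))
  have hT2Ym : ∀ r s, Disjoint (T2 r) (Ym s) := by
    intro r s
    by_cases hrs : r = s
    · subst hrs
      rw [Finset.disjoint_left]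
      intro x hx hx'
      exact (Finset.mem_sdiff.mp hx').2 (Finset.mem_inter.mp hx).2
    · exact Finset.disjoint_of_subset_left (hT2sub r)
        (Finset.disjoint_of_subset_right (hYmsub s) (hY r s hrs))
  have hT1Z : ∀ r s, Disjoint (T1 r) (Z s) := by
    intro r s
    rw [Finset.disjoint_left]
    intro x hx hx'
    exact (Finset.mem_sdiff.mp hx).2 (Finset.mem_biUnion.mpr ⟨s, Finset.mem_univ s, hx'⟩)
  have hYeq : (fun q => Ym q ∪ T2 q) = Y := by
    funext q
    rw [hYm, hT2]
    exact Finset.sdiff_union_inter (Y q) (U q)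
  have step1 : f Y ≤ f Ym + ∑ q, ∑ i ∈ T2 q, marg f Ym q i := by
    have := greedy f hsub (∑ q, (T2 q).card) Ym T2 rfl hYmdisj hT2disj hT2Ym
    rwa [hYeq] at this
  have hEmptyDisj : IsKDisjoint (fun _ : Fin k => (∅ : Finset N)) := by
    intro r s _; simp
  have step2 : ∀ q, ∀ i ∈ T2 q, marg f Ym q i ≤ marg f (fun _ => ∅) q i := by
    intro q i hi
    obtain ⟨hiY, hiU⟩ := Finset.mem_inter.mp hi
    refine marg_antitone f hsub hEmptyDisj hYmdisj (fun r => Finset.empty_subset _) q i ?_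
    intro s hs
    obtain ⟨hsY, hsU⟩ := Finset.mem_sdiff.mp hs
    by_cases hsq : s = q
    · subst hsq; exact hsU hiU
    · exact Finset.disjoint_left.mp (hY s q hsq) hsY hiY
  have step3 : ∀ q, ∑ i ∈ T2 q, marg f (fun _ => ∅) q i
      = ∑ p ∈ Finset.univ.erase q, ∑ i ∈ Y q ∩ Z p, marg f (fun _ => ∅) q i := by
    intro q
    have hT2b : T2 q = (Finset.univ.erase q).biUnion (fun p => Y q ∩ Z p) := by
      ext x
      simp only [hT2, hU, Finset.mem_inter, Finset.mem_biUnion, Finset.mem_erase, Finset.mem_univ,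
        true_and, and_true]
      tauto
    rw [hT2b]
    refine Finset.sum_biUnion ?_
    intro p hp p' hp' hpp'
    exact Finset.disjoint_of_subset_left Finset.inter_subset_right
      (Finset.disjoint_of_subset_right Finset.inter_subset_right (hZ p p' hpp'))
  have step4 : f Z'' ≤ f Z + ∑ q, ∑ i ∈ T1 q, marg f Z q i :=
    greedy f hsub (∑ q, (T1 q).card) Z T1 rfl hZ hT1disj hT1Z
  have hZ''disj : IsKDisjoint Z'' := by
    intro r s hrs
    rw [Finset.disjoint_left]
    intro x hx hx'
    rcases Finset.mem_union.mp hx with h | h <;> rcases Finset.mem_union.mp hx' with h' | h'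
    · exact Finset.disjoint_left.mp (hZ r s hrs) h h'
    · exact Finset.disjoint_left.mp (hT1Z s r) h' h
    · exact Finset.disjoint_left.mp (hT1Z r s) h h'
    · exact Finset.disjoint_left.mp (hT1disj r s hrs) h h'
  have step5 : f Ym ≤ f Z'' := by
    refine hmono Ym Z'' hYmdisj hZ''disj ?_
    intro q x hx
    obtain ⟨hxY, hxU⟩ := Finset.mem_sdiff.mp hx
    rw [hZ'', Finset.mem_union]
    by_cases hxb : x ∈ Finset.univ.biUnion Z
    · obtain ⟨p, _, hxp⟩ := Finset.mem_biUnion.mp hxb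
      by_cases hpq : p = q
      · subst hpq; exact Or.inl hxp
      · exact absurd (Finset.mem_biUnion.mpr ⟨p, Finset.mem_erase.mpr ⟨hpq, Finset.mem_univ p⟩, hxp⟩) hxU
    · exact Or.inr (Finset.mem_sdiff.mpr ⟨hxY, hxb⟩)
  have step2' : ∑ q, ∑ i ∈ T2 q, marg f Ym q i
      ≤ ∑ q, ∑ p ∈ Finset.univ.erase q, ∑ i ∈ Y q ∩ Z p, marg f (fun _ => ∅) q i := by
    refine Finset.sum_le_sum fun q _ => ?_
    rw [← step3 q]
    exact Finset.sum_le_sum fun i hi => step2 q i hi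
  calc f Y ≤ f Ym + ∑ q, ∑ i ∈ T2 q, marg f Ym q i := step1
    _ ≤ f Z'' + ∑ q, ∑ p ∈ Finset.univ.erase q, ∑ i ∈ Y q ∩ Z p, marg f (fun _ => ∅) q i := by
        linarith
    _ ≤ f Z + ∑ q, ∑ i ∈ T1 q, marg f Z q i
        + ∑ q, ∑ p ∈ Finset.univ.erase q, ∑ i ∈ Y q ∩ Z p, marg f (fun _ => ∅) q i := by
        linarith
end

section
/- The weighted coverage function f(S) = Σ_{i ∈ N} max_{q : i ∈ C_i(S)} μ_{i,q} (with the max over the set of sensor types covering site i under placement S, equal to 0 if no type covers i) is a monotone k-submodular function on X(N,k), where placing sensors S_q of type q covers a fixed set of sites determined by a coverage relation, and μ_{i,q} ≥ 0. -/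
open Finset

/-- Maximum of `g` over a finite set, with the convention that the max over `∅` is `0`. -/
noncomputable def maxOr0 {α : Type*} (S : Finset α) (g : α → ℝ) : ℝ :=
  if h : S.Nonempty then S.sup' h g else 0

/-! Site by site, the reward is the largest nonnegative weight among the types covering the
site. The types covering a site under `X ⊓ Y` cover it under both `X` and `Y`, and those
covering it under `X ⊔ Y` cover it under `X` or `Y`; hence the two rewards are bounded by the
`min` and the `max` of the rewards under `X` and `Y`, whose sum is the sum of those rewards. -/

section MaxOr0

variable {α : Type*} {S T A B : Finset α} {g : α → ℝ}

lemma maxOr0_nonneg (hg : ∀ a, 0 ≤ g a) : 0 ≤ maxOr0 S g := by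
  unfold maxOr0
  split_ifs with h
  · exact (hg _).trans (le_sup' g h.choose_spec)
  · exact le_rfl

lemma le_maxOr0 {a : α} (ha : a ∈ S) : g a ≤ maxOr0 S g := by
  rw [maxOr0, dif_pos ⟨a, ha⟩]
  exact le_sup' g ha

lemma maxOr0_le {x : ℝ} (hx : 0 ≤ x) (h : ∀ a ∈ S, g a ≤ x) : maxOr0 S g ≤ x := by
  unfold maxOr0
  split_ifs
  · exact sup'_le _ _ h
  · exact hx

lemma maxOr0_mono (hST : S ⊆ T) (hg : ∀ a, 0 ≤ g a) : maxOr0 S g ≤ maxOr0 T g :=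
  maxOr0_le (maxOr0_nonneg hg) fun _ ha => le_maxOr0 (hST ha)

lemma maxOr0_union [DecidableEq α] (hg : ∀ a, 0 ≤ g a) :
    maxOr0 (S ∪ T) g = max (maxOr0 S g) (maxOr0 T g) := by
  refine le_antisymm (maxOr0_le (le_max_of_le_left (maxOr0_nonneg hg)) fun a ha => ?_)
    (max_le (maxOr0_mono subset_union_left hg) (maxOr0_mono subset_union_right hg))
  rcases mem_union.1 ha with ha | ha
  · exact le_max_of_le_left (le_maxOr0 ha)
  · exact le_max_of_le_right (le_maxOr0 ha)

lemma maxOr0_add_maxOr0_le [DecidableEq α] (hg : ∀ a, 0 ≤ g a) (hA : A ⊆ S ∩ T)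
    (hB : B ⊆ S ∪ T) : maxOr0 A g + maxOr0 B g ≤ maxOr0 S g + maxOr0 T g :=
  calc maxOr0 A g + maxOr0 B g
      ≤ min (maxOr0 S g) (maxOr0 T g) + max (maxOr0 S g) (maxOr0 T g) := by
        gcongr
        · exact le_min (maxOr0_mono (hA.trans inter_subset_left) hg)
            (maxOr0_mono (hA.trans inter_subset_right) hg)
        · rw [← maxOr0_union hg]
          exact maxOr0_mono hB hg
    _ = maxOr0 S g + maxOr0 T g := min_add_max _ _

end MaxOr0

section CoveringTypes

variable {N ι : Type*} [Fintype ι] (R : ι → N → N → Prop) [∀ q, DecidableRel (R q)]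

/-- The set `C_i(S)` of sensor types covering the site `i` under the placement `S`. -/
def coveringTypes (S : ι → Finset N) (i : N) : Finset ι :=
  univ.filter fun q => ∃ j ∈ S q, R q j i

variable {R}

lemma mem_coveringTypes {S : ι → Finset N} {i : N} {q : ι} :
    q ∈ coveringTypes R S i ↔ ∃ j ∈ S q, R q j i := by
  simp [coveringTypes]

lemma coveringTypes_mono {X Y : ι → Finset N} (h : ∀ q, X q ⊆ Y q) (i : N) :
    coveringTypes R X i ⊆ coveringTypes R Y i := fun q hq => by
  obtain ⟨j, hj, hR⟩ := mem_coveringTypes.1 hq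
  exact mem_coveringTypes.2 ⟨j, h q hj, hR⟩

lemma coveringTypes_subset_union [DecidableEq ι] [DecidableEq N] {X Y Z : ι → Finset N}
    (h : ∀ q, Z q ⊆ X q ∪ Y q) (i : N) :
    coveringTypes R Z i ⊆ coveringTypes R X i ∪ coveringTypes R Y i := fun q hq => by
  obtain ⟨j, hj, hR⟩ := mem_coveringTypes.1 hq
  rcases mem_union.1 (h q hj) with hjX | hjY
  · exact mem_union_left _ (mem_coveringTypes.2 ⟨j, hjX, hR⟩)
  · exact mem_union_right _ (mem_coveringTypes.2 ⟨j, hjY, hR⟩)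

end CoveringTypes

/-- The weighted coverage function `f(S) = ∑_{i ∈ N} max_{q ∈ C_i(S)} μ_{i,q}`
is a monotone `k`-submodular function. -/
theorem weightedCoverage_monotone_kSubmodular
    {N : Type*} [Fintype N] [DecidableEq N] {k : ℕ}
    (R : Fin k → N → N → Prop) [∀ q, DecidableRel (R q)]
    (μ : N → Fin k → ℝ) (hμ : ∀ i q, 0 ≤ μ i q)
    (f : (Fin k → Finset N) → ℝ)
    (hf : ∀ S : Fin k → Finset N,
      f S = ∑ i : N,
        maxOr0 (Finset.univ.filter (fun q : Fin k => ∃ j ∈ S q, R q j i)) (μ i)) :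
    KMonotone f ∧ KSubmodular f := by
  have hcov : ∀ S, f S = ∑ i, maxOr0 (coveringTypes R S i) (μ i) := hf
  refine ⟨fun X Y _ _ hXY => ?_, fun X Y _ _ => ?_⟩
  · rw [hcov X, hcov Y]
    exact sum_le_sum fun i _ => maxOr0_mono (coveringTypes_mono hXY i) (hμ i)
  · rw [hcov (kInf X Y), hcov (kSup X Y), hcov X, hcov Y, ← sum_add_distrib, ← sum_add_distrib]
    refine sum_le_sum fun i _ => maxOr0_add_maxOr0_le (hμ i) ?_ ?_
    · exact subset_inter (coveringTypes_mono (fun _ => inter_subset_left) i)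
        (coveringTypes_mono (fun _ => inter_subset_right) i)
    · exact coveringTypes_subset_union (fun _ => sdiff_subset) i
end
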